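/- Let n ∈ ℕ, R > 0, v ∈ ℝⁿ. For each ε > 0 let φ_ε : εℤⁿ → ℝⁿ satisfy ‖φ_ε(z) − z‖ ≤ Rε for all z, and for each z ∈ εℤⁿ and i ∈ {1, …, n} let P_ε(z,i) = (r₀, …, r_N) be a finite sequence of points of ℝⁿ with r₀ = φ_ε(z), r_N = φ_ε(z + ε e_i), consecutive points distinct, and total Euclidean length Σ_k ‖r_{k+1} − r_k‖ ≤ 2R(R+1)ε. Then for every continuous compactly supported ψ : ℝⁿ → ℝⁿ, the sums S_ε := Σ_{z ∈ εℤⁿ} Σ_{i=1}^n ε^{n−1} v_i · Σ_k ∫_{[r_k, r_{k+1}]} ψ(p) · (r_{k+1} − r_k)/‖r_{k+1} − r_k‖ dH¹(p) (inner sum over the consecutive segments of P_ε(z,i); only finitely many z contribute nonzero terms) converge as ε → 0⁺ to ∫_{ℝⁿ} ψ(x) · v dx. -/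

import Mathlib

open MeasureTheory
open scoped RealInnerProductSpace

/-- The embedding of the lattice `ℤⁿ` into Euclidean space `ℝⁿ`. -/
noncomputable def latticeEmbed (n : ℕ) (z : Fin n → ℤ) : EuclideanSpace ℝ (Fin n) :=
  (WithLp.equiv 2 (Fin n → ℝ)).symm (fun i => (z i : ℝ))


namespace URVC

open Set
open scoped ENNReal NNReal

section SegInt

variable {E : Type*} [NormedAddCommGroup E] [InnerProductSpace ℝ E] [MeasurableSpace E]
  [BorelSpace E]

lemma seg_measure (a b : E) :
    (μH[1] : Measure E).restrict (segment ℝ a b) =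
      Measure.map (AffineMap.lineMap a b) ((nndist a b : ℝ≥0∞) • volume.restrict (Icc (0:ℝ) 1)) := by
  have hL : Continuous (AffineMap.lineMap a b : ℝ → E) := AffineMap.lineMap_continuous
  ext s hs
  rw [Measure.restrict_apply hs, Measure.map_apply hL.measurable hs, Measure.smul_apply,
    Measure.restrict_apply (hL.measurable hs)]
  have hseg : segment ℝ a b = (AffineMap.lineMap a b : ℝ → E) '' Icc 0 1 :=
    (segment_eq_image_lineMap ℝ a b)
  rw [hseg, Set.inter_comm, ← Set.image_inter_preimage, hausdorffMeasure_lineMap_image,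
    MeasureTheory.hausdorffMeasure_real, Set.inter_comm]
  rfl

lemma seg_integral (a b : E) (f : E → ℝ) (hf : Continuous f) :
    ∫ p in segment ℝ a b, f p ∂(μH[1]) =
      ‖b - a‖ * ∫ t in Icc (0:ℝ) 1, f (AffineMap.lineMap a b t) := by
  have : ∫ p in segment ℝ a b, f p ∂(μH[1]) =
      ∫ p, f p ∂(Measure.map (AffineMap.lineMap a b)
        ((nndist a b : ℝ≥0∞) • volume.restrict (Icc (0:ℝ) 1))) := by
    rw [← seg_measure]
  rw [this, integral_map (AffineMap.lineMap_continuous).aemeasurable hf.aestronglyMeasurable,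
    integral_smul_measure]
  rw [ENNReal.coe_toReal, coe_nndist, dist_eq_norm, norm_sub_rev, smul_eq_mul]

lemma path_integral_close (ψ : E → E) (hψ : Continuous ψ) (r : ℕ → E) (Nn : ℕ)
    (hne : ∀ k < Nn, r (k + 1) ≠ r k) (c : E) (ρ L η' : ℝ) (hη' : 0 ≤ η')
    (hstart : ‖r 0 - c‖ ≤ ρ)
    (hlen : ∑ k ∈ Finset.range Nn, ‖r (k + 1) - r k‖ ≤ L)
    (hmod : ∀ p : E, ‖p - c‖ ≤ ρ + L → ‖ψ p - ψ c‖ ≤ η') :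
    |(∑ k ∈ Finset.range Nn, ∫ p in segment ℝ (r k) (r (k + 1)),
        ⟪ψ p, ‖r (k + 1) - r k‖⁻¹ • (r (k + 1) - r k)⟫ ∂(μH[1])) -
      ⟪ψ c, r Nn - r 0⟫| ≤ η' * L := by
  have hLnn : 0 ≤ L := le_trans (Finset.sum_nonneg fun k _ => norm_nonneg _) hlen
  have hdist : ∀ k, k ≤ Nn → ∀ t ∈ Icc (0:ℝ) 1, k < Nn →
      ‖AffineMap.lineMap (r k) (r (k+1)) t - c‖ ≤ ρ + L := by
    intro k _ t ht hk
    have hline : AffineMap.lineMap (r k) (r (k+1)) t - r k = t • (r (k+1) - r k) := by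
      simp [AffineMap.lineMap_apply_module]; module
    have h1 : ‖AffineMap.lineMap (r k) (r (k+1)) t - r k‖ ≤ ‖r (k+1) - r k‖ := by
      rw [hline, norm_smul, Real.norm_eq_abs, abs_of_nonneg ht.1]
      nlinarith [norm_nonneg (r (k+1) - r k), ht.2]
    have h2 : ‖r k - r 0‖ ≤ ∑ j ∈ Finset.range k, ‖r (j+1) - r j‖ := by
      calc ‖r k - r 0‖ = ‖∑ j ∈ Finset.range k, (r (j+1) - r j)‖ := by
            rw [Finset.sum_range_sub]
        _ ≤ _ := norm_sum_le _ _
    have h3 : ∑ j ∈ Finset.range (k+1), ‖r (j+1) - r j‖ ≤ L := by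
      refine le_trans (Finset.sum_le_sum_of_subset_of_nonneg
        (Finset.range_subset_range.mpr hk) (fun j _ _ => norm_nonneg _)) hlen
    rw [Finset.sum_range_succ] at h3
    calc ‖AffineMap.lineMap (r k) (r (k+1)) t - c‖
        ≤ ‖AffineMap.lineMap (r k) (r (k+1)) t - r k‖ + ‖r k - r 0‖ + ‖r 0 - c‖ := by
          have := norm_add₃_le (a := AffineMap.lineMap (r k) (r (k+1)) t - r k)
            (b := r k - r 0) (c := r 0 - c)
          simpa using this
      _ ≤ ρ + L := by linarith
  have per : ∀ k < Nn,
      |(∫ p in segment ℝ (r k) (r (k + 1)),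
          ⟪ψ p, ‖r (k + 1) - r k‖⁻¹ • (r (k + 1) - r k)⟫ ∂(μH[1])) -
        ⟪ψ c, r (k+1) - r k⟫| ≤ η' * ‖r (k+1) - r k‖ := by
    intro k hk
    set Δ := r (k+1) - r k with hΔ
    have hΔne : Δ ≠ 0 := sub_ne_zero.mpr (hne k hk)
    have hΔpos : 0 < ‖Δ‖ := norm_pos_iff.mpr hΔne
    have hcont : Continuous fun p => ⟪ψ p, ‖Δ‖⁻¹ • Δ⟫ := (hψ.inner continuous_const)
    rw [seg_integral _ _ _ hcont]
    have hsmul : ∀ q : E, ‖Δ‖ * ⟪q, ‖Δ‖⁻¹ • Δ⟫ = ⟪q, Δ⟫ := by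
      intro q
      rw [real_inner_smul_right]
      field_simp
    have hIcc1 : (volume (Icc (0:ℝ) 1)).toReal = 1 := by
      rw [Real.volume_Icc]; simp
    have hgcont : Continuous fun t : ℝ => ⟪ψ (AffineMap.lineMap (r k) (r (k+1)) t), Δ⟫ :=
      ((hψ.comp (AffineMap.lineMap_continuous)).inner continuous_const)
    rw [← MeasureTheory.integral_const_mul]
    have heq : ∀ t : ℝ, ‖Δ‖ * ⟪ψ (AffineMap.lineMap (r k) (r (k+1)) t), ‖Δ‖⁻¹ • Δ⟫ =
        ⟪ψ (AffineMap.lineMap (r k) (r (k+1)) t), Δ⟫ := fun t => hsmul _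
    rw [MeasureTheory.setIntegral_congr_fun measurableSet_Icc (fun t _ => heq t)]
    have hc' : ⟪ψ c, Δ⟫ = ∫ _t in Icc (0:ℝ) 1, ⟪ψ c, Δ⟫ := by
      rw [MeasureTheory.setIntegral_const, measureReal_def, hIcc1, one_smul]
    rw [hc', ← MeasureTheory.integral_sub (hgcont.integrableOn_Icc)
      (MeasureTheory.integrableOn_const (by rw [Real.volume_Icc]; simp))]
    have hbound : ∀ t ∈ Icc (0:ℝ) 1,
        ‖⟪ψ (AffineMap.lineMap (r k) (r (k+1)) t), Δ⟫ - ⟪ψ c, Δ⟫‖ ≤ η' * ‖Δ‖ := by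
      intro t ht
      rw [← inner_sub_left, Real.norm_eq_abs]
      refine (abs_real_inner_le_norm _ _).trans ?_
      exact mul_le_mul_of_nonneg_right (hmod _ (hdist k hk.le t ht hk)) (norm_nonneg _)
    have := MeasureTheory.norm_setIntegral_le_of_norm_le_const
      (by rw [Real.volume_Icc]; simp : volume (Icc (0:ℝ) 1) < ⊤) hbound
    rw [Real.norm_eq_abs, measureReal_def, hIcc1, mul_one] at this
    exact this
  have htel : ⟪ψ c, r Nn - r 0⟫ = ∑ k ∈ Finset.range Nn, ⟪ψ c, r (k+1) - r k⟫ := by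
    rw [← inner_sum, Finset.sum_range_sub]
  rw [htel, ← Finset.sum_sub_distrib]
  refine (Finset.abs_sum_le_sum_abs _ _).trans ?_
  calc ∑ k ∈ Finset.range Nn, _ ≤ ∑ k ∈ Finset.range Nn, η' * ‖r (k+1) - r k‖ :=
        Finset.sum_le_sum (fun k hk => per k (Finset.mem_range.mp hk))
    _ = η' * ∑ k ∈ Finset.range Nn, ‖r (k+1) - r k‖ := by rw [Finset.mul_sum]
    _ ≤ η' * L := mul_le_mul_of_nonneg_left hlen hη'

end SegInt

section Lattice

variable {n : ℕ}

lemma latticeEmbed_apply (z : Fin n → ℤ) (i : Fin n) : latticeEmbed n z i = (z i : ℝ) := rfl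

lemma latticeEmbed_add (z w : Fin n → ℤ) :
    latticeEmbed n (z + w) = latticeEmbed n z + latticeEmbed n w := by
  ext i; simp [latticeEmbed_apply]

lemma coord_abs_le_norm (x : EuclideanSpace ℝ (Fin n)) (i : Fin n) : |x i| ≤ ‖x‖ := by
  rw [EuclideanSpace.norm_eq, ← Real.sqrt_sq_eq_abs]
  apply Real.sqrt_le_sqrt
  simpa using Finset.single_le_sum (f := fun j => ‖x j‖^2) (fun j _ => sq_nonneg _)
    (Finset.mem_univ i)

lemma latticeEmbed_single_eq (i : Fin n) :
    latticeEmbed n (Pi.single i 1) = EuclideanSpace.single i (1:ℝ) := by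
  ext j
  simp [latticeEmbed_apply, Pi.single_apply, EuclideanSpace.single_apply]

lemma latticeEmbed_single_norm (i : Fin n) : ‖latticeEmbed n (Pi.single i 1)‖ = 1 := by
  rw [latticeEmbed_single_eq, EuclideanSpace.norm_single, norm_one]

lemma inner_latticeEmbed_single (x : EuclideanSpace ℝ (Fin n)) (i : Fin n) :
    ⟪x, latticeEmbed n (Pi.single i 1)⟫ = x i := by
  rw [latticeEmbed_single_eq, EuclideanSpace.inner_single_right]
  simp

lemma lattice_finite (ε M : ℝ) (hε : 0 < ε) :
    {z : Fin n → ℤ | ‖ε • latticeEmbed n z‖ ≤ M}.Finite := by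
  have : {z : Fin n → ℤ | ‖ε • latticeEmbed n z‖ ≤ M} ⊆
      Set.pi univ (fun _ : Fin n => {m : ℤ | |m| ≤ ⌈M / ε⌉}) := by
    intro z hz i _
    have h1 : |ε * (z i : ℝ)| ≤ M := by
      have := coord_abs_le_norm (ε • latticeEmbed n z) i
      simpa [latticeEmbed_apply] using this.trans hz
    have h2 : (|z i| : ℝ) ≤ M / ε := by
      rw [le_div_iff₀ hε]
      calc (|z i| : ℝ) * ε = |ε * (z i : ℝ)| := by
            rw [abs_mul, abs_of_pos hε]; ring
        _ ≤ M := h1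
    have : (|z i| : ℝ) ≤ (⌈M / ε⌉ : ℝ) := h2.trans (Int.le_ceil _)
    exact_mod_cast this
  exact Set.Finite.subset (Set.Finite.pi (fun i => Set.finite_Icc (-⌈M / ε⌉) ⌈M / ε⌉ |>.subset
    (fun m hm => by simp only [mem_Icc]; exact abs_le.mp hm))) this

/-- The half-open cube based at the lattice point `ε z`. -/
def cube (n : ℕ) (ε : ℝ) (z : Fin n → ℤ) : Set (EuclideanSpace ℝ (Fin n)) :=
  {x | ∀ i, ε * z i ≤ x i ∧ x i < ε * (z i + 1)}

lemma cube_eq_preimage (ε : ℝ) (z : Fin n → ℤ) :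
    cube n ε z = (MeasurableEquiv.toLp 2 (Fin n → ℝ)).symm ⁻¹'
      (Set.pi univ fun i => Ico (ε * z i) (ε * (z i + 1))) := by
  ext x
  simp [cube, Set.mem_pi]

lemma cube_measurable (ε : ℝ) (z : Fin n → ℤ) : MeasurableSet (cube n ε z) := by
  rw [cube_eq_preimage]
  exact (MeasurableEquiv.toLp 2 (Fin n → ℝ)).symm.measurable
    (MeasurableSet.univ_pi fun i => measurableSet_Ico)

lemma cube_volume (ε : ℝ) (hε : 0 < ε) (z : Fin n → ℤ) :
    volume (cube n ε z) = ENNReal.ofReal (ε ^ n) := by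
  rw [cube_eq_preimage,
    (EuclideanSpace.volume_preserving_symm_measurableEquiv_toLp (Fin n)).measure_preimage
      (MeasurableSet.univ_pi fun i => measurableSet_Ico).nullMeasurableSet,
    MeasureTheory.volume_pi_pi]
  have : ∀ i : Fin n, volume (Ico (ε * (z i:ℝ)) (ε * (z i + 1))) = ENNReal.ofReal ε := by
    intro i; rw [Real.volume_Ico]; ring_nf
  rw [Finset.prod_congr rfl (fun i _ => this i), Finset.prod_const, Finset.card_univ,
    Fintype.card_fin, ← ENNReal.ofReal_pow hε.le]

lemma cube_disjoint (ε : ℝ) (hε : 0 < ε) : Pairwise (Function.onFun Disjoint (cube n ε)) := by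
  intro z z' hne
  rw [Function.onFun, Set.disjoint_left]
  intro x hx hx'
  apply hne
  funext i
  have h1 := hx i; have h2 := hx' i
  have hcast : ∀ a b : ℤ, ε * a ≤ x i → x i < ε * (b + 1) → a < b + 1 := by
    intro a b ha hb
    have := ha.trans_lt hb
    have := (mul_lt_mul_iff_right₀ hε).mp this
    have h3 : ((a:ℤ):ℝ) < ((b + 1 : ℤ):ℝ) := by push_cast; linarith
    exact Int.cast_lt.mp h3
  have := hcast _ _ h1.1 h2.2
  have := hcast _ _ h2.1 h1.2
  omega

lemma cube_cover (ε : ℝ) (hε : 0 < ε) : (⋃ z, cube n ε z) = univ := by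
  ext x
  simp only [mem_iUnion, mem_univ, iff_true]
  refine ⟨fun i => ⌊x i / ε⌋, fun i => ⟨?_, ?_⟩⟩
  · calc ε * ⌊x i / ε⌋ ≤ ε * (x i / ε) := by
          exact mul_le_mul_of_nonneg_left (Int.floor_le _) hε.le
      _ = x i := by field_simp
  · calc x i = ε * (x i / ε) := by field_simp
      _ < ε * (⌊x i / ε⌋ + 1) := by
          exact (mul_lt_mul_iff_right₀ hε).mpr (Int.lt_floor_add_one _)

lemma cube_subset_ball (ε : ℝ) (hε : 0 < ε) (z : Fin n → ℤ) (x : EuclideanSpace ℝ (Fin n))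
    (hx : x ∈ cube n ε z) : ‖x - ε • latticeEmbed n z‖ ≤ (n + 1) * ε := by
  have hb : ∀ i, |x i - ε * z i| ≤ ε := by
    intro i
    have h := hx i
    rw [abs_le]
    constructor
    · linarith [h.1]
    · have : x i < ε * z i + ε := by have := h.2; push_cast at this ⊢; linarith
      linarith
  rw [EuclideanSpace.norm_eq]
  have key : ∑ i, ‖(x - ε • latticeEmbed n z) i‖ ^ 2 ≤ ((n+1) * ε)^2 := by
    calc ∑ i, ‖(x - ε • latticeEmbed n z) i‖ ^ 2 ≤ ∑ _i : Fin n, ε ^ 2 := by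
          apply Finset.sum_le_sum
          intro i _
          have : (x - ε • latticeEmbed n z) i = x i - ε * z i := by
            simp [latticeEmbed_apply]
          rw [this, Real.norm_eq_abs, sq_abs]
          have h2 := abs_le.mp (hb i)
          nlinarith [h2.1, h2.2]
      _ = n * ε ^ 2 := by simp [Finset.sum_const]
      _ ≤ ((n+1) * ε)^2 := by nlinarith [sq_nonneg ε, hε.le]
  calc Real.sqrt (∑ i, ‖(x - ε • latticeEmbed n z) i‖ ^ 2) ≤ Real.sqrt (((n+1) * ε)^2) :=
        Real.sqrt_le_sqrt key
    _ = (n+1) * ε := Real.sqrt_sq (by positivity)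

lemma card_cubes_le (ε M : ℝ) (hε : 0 < ε) (F : Finset (Fin n → ℤ))
    (hF : ∀ z ∈ F, ‖ε • latticeEmbed n z‖ ≤ M) :
    (F.card : ℝ) * ε ^ n ≤
      (volume (Metric.closedBall (0 : EuclideanSpace ℝ (Fin n)) (M + (n+1)*ε))).toReal := by
  have hsub : (⋃ z ∈ F, cube n ε z) ⊆ Metric.closedBall 0 (M + (n+1)*ε) := by
    intro x hx
    simp only [mem_iUnion] at hx
    obtain ⟨z, hz, hxz⟩ := hx
    rw [Metric.mem_closedBall, dist_zero_right]
    calc ‖x‖ ≤ ‖ε • latticeEmbed n z‖ + ‖x - ε • latticeEmbed n z‖ := by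
          have := norm_add_le (ε • latticeEmbed n z) (x - ε • latticeEmbed n z)
          simpa using this
      _ ≤ M + (n+1)*ε := add_le_add (hF z hz) (cube_subset_ball ε hε z x hxz)
  have hvol : volume (⋃ z ∈ F, cube n ε z) = F.card * ENNReal.ofReal (ε ^ n) := by
    rw [measure_biUnion_finset (fun z _ z' _ hne => cube_disjoint ε hε hne)
      (fun z _ => cube_measurable ε z)]
    simp [cube_volume ε hε]
  have hle : (F.card : ℝ≥0∞) * ENNReal.ofReal (ε ^ n) ≤
      volume (Metric.closedBall (0 : EuclideanSpace ℝ (Fin n)) (M + (n+1)*ε)) := by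
    rw [← hvol]; exact measure_mono hsub
  have hfin : volume (Metric.closedBall (0 : EuclideanSpace ℝ (Fin n)) (M + (n+1)*ε)) ≠ ⊤ :=
    (MeasureTheory.measure_closedBall_lt_top).ne
  have := ENNReal.toReal_mono hfin hle
  rw [ENNReal.toReal_mul, ENNReal.toReal_ofReal (by positivity)] at this
  simpa using this

lemma riemann_sum_close (g : EuclideanSpace ℝ (Fin n) → ℝ) (hg : Continuous g)
    (hgc : HasCompactSupport g) (K : ℝ) (hK : tsupport g ⊆ Metric.closedBall 0 K)
    (ε η' : ℝ) (hε : 0 < ε) (F : Finset (Fin n → ℤ))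
    (hF1 : ∀ z : Fin n → ℤ, ‖ε • latticeEmbed n z‖ ≤ K + (n+1)*ε → z ∈ F)
    (hmod : ∀ x y : EuclideanSpace ℝ (Fin n), dist x y ≤ (n+1)*ε → |g x - g y| ≤ η') :
    |(∑ z ∈ F, ε ^ n * g (ε • latticeEmbed n z)) - ∫ x, g x| ≤ (F.card : ℝ) * (η' * ε ^ n) := by
  have hint : Integrable g := hg.integrable_of_hasCompactSupport hgc
  have h1 : ∫ x, g x = ∑' z : Fin n → ℤ, ∫ x in cube n ε z, g x := by
    rw [← MeasureTheory.setIntegral_univ (f := g), ← cube_cover ε hε,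
      MeasureTheory.integral_iUnion (fun z => cube_measurable ε z) (cube_disjoint ε hε)
        hint.integrableOn]
  have h2 : ∑' z : Fin n → ℤ, ∫ x in cube n ε z, g x = ∑ z ∈ F, ∫ x in cube n ε z, g x := by
    apply tsum_eq_sum
    intro z hz
    apply MeasureTheory.setIntegral_eq_zero_of_forall_eq_zero
    intro x hx
    apply image_eq_zero_of_notMem_tsupport
    intro hmem
    apply hz
    apply hF1
    calc ‖ε • latticeEmbed n z‖ ≤ ‖x‖ + ‖x - ε • latticeEmbed n z‖ := by
          have := norm_add_le x (ε • latticeEmbed n z - x)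
          simp only [add_sub_cancel] at this
          rw [← norm_neg (x - ε • latticeEmbed n z), neg_sub]
          exact this
      _ ≤ K + (n+1)*ε := by
          have hxK : ‖x‖ ≤ K := by
            have := hK hmem
            rwa [Metric.mem_closedBall, dist_zero_right] at this
          exact add_le_add hxK (cube_subset_ball ε hε z x hx)
  rw [h1, h2, ← Finset.sum_sub_distrib]
  refine (Finset.abs_sum_le_sum_abs _ _).trans ?_
  have per : ∀ z ∈ F, |ε ^ n * g (ε • latticeEmbed n z) - ∫ x in cube n ε z, g x| ≤ η' * ε ^ n := by
    intro z _
    have hvolQ : volume (cube n ε z) = ENNReal.ofReal (ε ^ n) := cube_volume ε hε z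
    have hconst : ε ^ n * g (ε • latticeEmbed n z) =
        ∫ _x in cube n ε z, g (ε • latticeEmbed n z) := by
      rw [MeasureTheory.setIntegral_const, measureReal_def, hvolQ, ENNReal.toReal_ofReal (by positivity),
        smul_eq_mul]
    have hfinQ : volume (cube n ε z) < ⊤ := by rw [hvolQ]; exact ENNReal.ofReal_lt_top
    rw [hconst, ← MeasureTheory.integral_sub (MeasureTheory.integrableOn_const (C := g (ε • latticeEmbed n z)) hfinQ.ne)
      hint.integrableOn]
    have := MeasureTheory.norm_setIntegral_le_of_norm_le_const hfinQ
      (C := η') (f := fun x => g (ε • latticeEmbed n z) - g x) ?_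
    · rw [Real.norm_eq_abs] at this
      refine this.trans ?_
      rw [measureReal_def, hvolQ, ENNReal.toReal_ofReal (by positivity)]
    · intro x hx
      rw [Real.norm_eq_abs]
      apply hmod
      rw [dist_eq_norm, ← norm_neg, neg_sub]
      exact cube_subset_ball ε hε z x hx
  calc ∑ z ∈ F, |ε ^ n * g (ε • latticeEmbed n z) - ∫ x in cube n ε z, g x|
      ≤ ∑ _z ∈ F, η' * ε ^ n := Finset.sum_le_sum per
    _ = (F.card : ℝ) * (η' * ε ^ n) := by rw [Finset.sum_const, nsmul_eq_mul]

end Lattice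

end URVC

open URVC Set
open scoped ENNReal NNReal

set_option maxHeartbeats 1600000 in
/-- Vague convergence of the embedded uniform representative flow `ι𝒥ᵉ_v` to `v·Λⁿ`:
for every continuous compactly supported `ψ : ℝⁿ → ℝⁿ`, the pairings
`S_ε = Σ_z Σ_i ε^{n−1} v_i Σ_k ∫_{[r_k,r_{k+1}]} ⟪ψ, (r_{k+1}−r_k)/‖r_{k+1}−r_k‖⟫ dH¹`
(only finitely many `z` contributing) converge to `∫ ⟪ψ(x), v⟫ dx` as `ε → 0⁺`. -/
theorem uniform_representative_vague_convergence (n : ℕ) (R : ℝ) (hR : 0 < R)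
    (v : EuclideanSpace ℝ (Fin n))
    (φ : ℝ → (Fin n → ℤ) → EuclideanSpace ℝ (Fin n))
    (N : ℝ → (Fin n → ℤ) → Fin n → ℕ)
    (P : ℝ → (Fin n → ℤ) → Fin n → ℕ → EuclideanSpace ℝ (Fin n))
    (hφ : ∀ ε : ℝ, 0 < ε → ∀ z, ‖φ ε z - ε • latticeEmbed n z‖ ≤ R * ε)
    (hP0 : ∀ ε : ℝ, 0 < ε → ∀ z i, P ε z i 0 = φ ε z)
    (hPN : ∀ ε : ℝ, 0 < ε → ∀ z i, P ε z i (N ε z i) = φ ε (z + Pi.single i 1))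
    (hPne : ∀ ε : ℝ, 0 < ε → ∀ z i, ∀ k < N ε z i, P ε z i (k + 1) ≠ P ε z i k)
    (hlen : ∀ ε : ℝ, 0 < ε → ∀ z i,
      ∑ k ∈ Finset.range (N ε z i), ‖P ε z i (k + 1) - P ε z i k‖ ≤ 2 * R * (R + 1) * ε)
    (ψ : EuclideanSpace ℝ (Fin n) → EuclideanSpace ℝ (Fin n))
    (hψ : Continuous ψ) (hψc : HasCompactSupport ψ) :
    letI S : ℝ → ℝ := fun ε =>
      ∑ᶠ z : Fin n → ℤ, ∑ i : Fin n, ε ^ ((n : ℤ) - 1) * v i *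
        ∑ k ∈ Finset.range (N ε z i),
          ∫ p in segment ℝ (P ε z i k) (P ε z i (k + 1)),
            ⟪ψ p, ‖P ε z i (k + 1) - P ε z i k‖⁻¹ • (P ε z i (k + 1) - P ε z i k)⟫ ∂(μH[1])
    (∀ ε : ℝ, 0 < ε → {z : Fin n → ℤ |
        (∑ i : Fin n, ε ^ ((n : ℤ) - 1) * v i *
          ∑ k ∈ Finset.range (N ε z i),
            ∫ p in segment ℝ (P ε z i k) (P ε z i (k + 1)),
              ⟪ψ p, ‖P ε z i (k + 1) - P ε z i k‖⁻¹ •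
                (P ε z i (k + 1) - P ε z i k)⟫ ∂(μH[1])) ≠ 0}.Finite) ∧
      Filter.Tendsto S (nhdsWithin 0 (Set.Ioi 0)) (nhds (∫ x, ⟪ψ x, v⟫)) := by
  classical
  obtain ⟨K0, hK0⟩ := hψc.isBounded.subset_closedBall (0 : EuclideanSpace ℝ (Fin n))
  set K : ℝ := max K0 0 with hKdef
  have hKnn : (0:ℝ) ≤ K := le_max_right _ _
  have hKsub : tsupport ψ ⊆ Metric.closedBall 0 K :=
    hK0.trans (Metric.closedBall_subset_closedBall (le_max_left _ _))
  have hψzero : ∀ p : EuclideanSpace ℝ (Fin n), K < ‖p‖ → ψ p = 0 := by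
    intro p hp
    apply image_eq_zero_of_notMem_tsupport
    intro hmem
    have := hKsub hmem
    rw [Metric.mem_closedBall, dist_zero_right] at this
    linarith
  set C : ℝ := R + 2 * R * (R + 1) with hCdef
  have hCpos : 0 < C := by rw [hCdef]; nlinarith
  have Wzero : ∀ ε : ℝ, 0 < ε → ∀ z : Fin n → ℤ, K + C * ε < ‖ε • latticeEmbed n z‖ →
      ∀ i : Fin n, (∑ k ∈ Finset.range (N ε z i),
        ∫ p in segment ℝ (P ε z i k) (P ε z i (k + 1)),
          ⟪ψ p, ‖P ε z i (k + 1) - P ε z i k‖⁻¹ • (P ε z i (k + 1) - P ε z i k)⟫ ∂(μH[1])) = 0 := by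
    intro ε hε z hz i
    have hCε : 0 ≤ C * ε := by positivity
    have hc0 : ψ (ε • latticeEmbed n z) = 0 := hψzero _ (by linarith)
    have key := path_integral_close ψ hψ (P ε z i) (N ε z i) (hPne ε hε z i)
      (ε • latticeEmbed n z) (R * ε) (2 * R * (R + 1) * ε) 0 le_rfl
      (by rw [hP0 ε hε z i]; exact hφ ε hε z)
      (hlen ε hε z i) ?_
    · rw [hc0, inner_zero_left, sub_zero, zero_mul] at key
      exact abs_nonpos_iff.mp key
    · intro p hp
      have hRC : R * ε + 2 * R * (R + 1) * ε = C * ε := by rw [hCdef]; ring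
      rw [hRC] at hp
      have hpn : K < ‖p‖ := by
        have h2 := norm_sub_norm_le (ε • latticeEmbed n z) p
        rw [norm_sub_rev] at h2
        linarith
      rw [hψzero p hpn, hc0, sub_zero, norm_zero]
  refine ⟨?_, ?_⟩
  · -- finiteness of the support
    intro ε hε
    refine (lattice_finite ε (K + C * ε) hε).subset ?_
    intro z hz
    simp only [mem_setOf_eq] at hz ⊢
    by_contra hgt
    push_neg at hgt
    exact hz (Finset.sum_eq_zero fun i _ => by rw [Wzero ε hε z hgt i, mul_zero])
  · -- the limit
    rw [Metric.tendsto_nhdsWithin_nhds]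
    intro η hη
    have hV0 : (0:ℝ) ≤ (volume (Metric.closedBall (0 : EuclideanSpace ℝ (Fin n))
        (K + C + (n:ℝ) + 5))).toReal := ENNReal.toReal_nonneg
    set V : ℝ := (volume (Metric.closedBall (0 : EuclideanSpace ℝ (Fin n))
        (K + C + (n:ℝ) + 5))).toReal + 1 with hVdef
    have hV1 : (1:ℝ) ≤ V := by rw [hVdef]; linarith
    have hVpos : (0:ℝ) < V := by linarith
    set Sv : ℝ := ∑ i : Fin n, |v i| with hSvdef
    have hSv : 0 ≤ Sv := Finset.sum_nonneg fun i _ => abs_nonneg _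
    set D : ℝ := Sv * (2*R*(R+1)) * V + Sv * (2*R) * V + ‖v‖ * V with hDdef
    have hD0 : 0 ≤ D := by
      have h1 : 0 ≤ Sv * (2*R*(R+1)) * V := mul_nonneg (mul_nonneg hSv (by nlinarith)) hVpos.le
      have h2 : 0 ≤ Sv * (2*R) * V := mul_nonneg (mul_nonneg hSv (by nlinarith)) hVpos.le
      have h3 : 0 ≤ ‖v‖ * V := mul_nonneg (norm_nonneg v) hVpos.le
      rw [hDdef]; linarith
    set η' : ℝ := η / (D + 1) with hη'def
    have hη'pos : 0 < η' := by rw [hη'def]; positivity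
    have hu : UniformContinuous ψ := hψc.uniformContinuous_of_continuous hψ
    obtain ⟨δ0, hδ0pos, hδ0⟩ := Metric.uniformContinuous_iff.mp hu η' hη'pos
    have hmod : ∀ p q : EuclideanSpace ℝ (Fin n), dist p q < δ0 → ‖ψ p - ψ q‖ ≤ η' := by
      intro p q h
      have := hδ0 h
      rw [dist_eq_norm] at this
      exact this.le
    refine ⟨min 1 δ0 / (C + (n:ℝ) + 2), by positivity, ?_⟩
    intro ε hεIoi hεdist
    rw [Set.mem_Ioi] at hεIoi
    rw [Real.dist_eq, sub_zero, abs_of_pos hεIoi] at hεdist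
    have hεC : ε * (C + (n:ℝ) + 2) < min 1 δ0 := (lt_div_iff₀ (by positivity)).mp hεdist
    have hmin1 : min 1 δ0 ≤ 1 := min_le_left _ _
    have hminδ : min 1 δ0 ≤ δ0 := min_le_right _ _
    have hnn : (0:ℝ) ≤ (n:ℝ) := Nat.cast_nonneg n
    have hmul : ∀ a : ℝ, 0 ≤ a → a ≤ C + (n:ℝ) + 2 → ε * a < min 1 δ0 := by
      intro a ha hle
      calc ε * a ≤ ε * (C + (n:ℝ) + 2) := mul_le_mul_of_nonneg_left hle hεIoi.le
        _ < min 1 δ0 := hεC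
    have hε1 : ε ≤ 1 := by
      have := hmul 1 one_pos.le (by linarith)
      rw [mul_one] at this
      exact (this.trans_le hmin1).le
    have hCεδ : C * ε < δ0 := by
      have := hmul C hCpos.le (by linarith)
      rw [mul_comm] at this
      exact this.trans_le hminδ
    have hnεδ : ((n:ℝ)+1) * ε < δ0 := by
      have := hmul ((n:ℝ)+1) (by linarith) (by linarith)
      rw [mul_comm] at this
      exact this.trans_le hminδ
    have hεδ : ε < δ0 := by
      have := hmul 1 one_pos.le (by linarith)
      rw [mul_one] at this
      exact this.trans_le hminδ
    have hnε1 : ((n:ℝ)+1) * ε ≤ 1 := by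
      have := hmul ((n:ℝ)+1) (by linarith) (by linarith)
      rw [mul_comm] at this
      exact (this.trans_le hmin1).le
    have hCε1 : C * ε ≤ C + 3 := by
      calc C * ε ≤ C * 1 := mul_le_mul_of_nonneg_left hε1 hCpos.le
        _ ≤ C + 3 := by linarith
    have hFz := lattice_finite (n := n) ε (K + C + 3) hεIoi
    set F : Finset (Fin n → ℤ) := hFz.toFinset with hFdef
    have hmemF : ∀ z : Fin n → ℤ, z ∈ F ↔ ‖ε • latticeEmbed n z‖ ≤ K + C + 3 := by
      intro z; rw [hFdef, Set.Finite.mem_toFinset]; rfl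
    have hcardV : (F.card : ℝ) * ε ^ n ≤ V := by
      refine (card_cubes_le ε (K + C + 3) hεIoi F (fun z hz => (hmemF z).mp hz)).trans ?_
      rw [hVdef]
      have hsub : Metric.closedBall (0 : EuclideanSpace ℝ (Fin n)) (K + C + 3 + ((n:ℝ)+1)*ε)
          ⊆ Metric.closedBall 0 (K + C + (n:ℝ) + 5) :=
        Metric.closedBall_subset_closedBall (by nlinarith)
      have := ENNReal.toReal_mono
        (MeasureTheory.measure_closedBall_lt_top (μ := (volume : Measure (EuclideanSpace ℝ (Fin n))))
          (x := (0 : EuclideanSpace ℝ (Fin n))) (r := K + C + (n:ℝ) + 5)).ne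
        (measure_mono hsub)
      linarith
    have hzpow : ε ^ ((n:ℤ)-1) * ε = ε ^ n := by
      have h := zpow_add_one₀ (ne_of_gt hεIoi) ((n:ℤ)-1)
      rw [sub_add_cancel] at h
      rw [← h, zpow_natCast]
    have hzpnn : 0 ≤ ε ^ ((n:ℤ)-1) := zpow_nonneg hεIoi.le _
    set W : (Fin n → ℤ) → Fin n → ℝ := fun z i => ∑ k ∈ Finset.range (N ε z i),
      ∫ p in segment ℝ (P ε z i k) (P ε z i (k + 1)),
        ⟪ψ p, ‖P ε z i (k + 1) - P ε z i k‖⁻¹ • (P ε z i (k + 1) - P ε z i k)⟫ ∂(μH[1])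
      with hWdef
    set A : (Fin n → ℤ) → ℝ := fun z => ∑ i, ε ^ ((n:ℤ)-1) * v i *
      ⟪ψ (ε • latticeEmbed n z), φ ε (z + Pi.single i 1) - φ ε z⟫ with hAdef
    -- Step 0 : the finsum is a sum over F
    have hgoal : (∑ᶠ z : Fin n → ℤ, ∑ i, ε ^ ((n:ℤ)-1) * v i * W z i)
        = ∑ z ∈ F, ∑ i, ε ^ ((n:ℤ)-1) * v i * W z i := by
      apply finsum_eq_sum_of_support_subset
      intro z hz
      rw [Function.mem_support] at hz
      rw [Finset.mem_coe, hmemF]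
      by_contra hgt
      push_neg at hgt
      apply hz
      refine Finset.sum_eq_zero fun i _ => ?_
      have hzK : K + C * ε < ‖ε • latticeEmbed n z‖ := by linarith
      have hW0 : W z i = 0 := Wzero ε hεIoi z hzK i
      rw [hW0, mul_zero]
    -- Step 1 : per-z comparison with A
    have hstep1 : ∀ z : Fin n → ℤ,
        |(∑ i, ε ^ ((n:ℤ)-1) * v i * W z i) - A z| ≤ Sv * (η' * (2*R*(R+1)) * ε^n) := by
      intro z
      rw [hAdef]
      simp only []
      rw [← Finset.sum_sub_distrib]
      refine (Finset.abs_sum_le_sum_abs _ _).trans ?_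
      have hper : ∀ i : Fin n, |ε ^ ((n:ℤ)-1) * v i * W z i - ε ^ ((n:ℤ)-1) * v i *
          ⟪ψ (ε • latticeEmbed n z), φ ε (z + Pi.single i 1) - φ ε z⟫|
          ≤ |v i| * (η' * (2*R*(R+1)) * ε^n) := by
        intro i
        have hkey := path_integral_close ψ hψ (P ε z i) (N ε z i) (hPne ε hεIoi z i)
          (ε • latticeEmbed n z) (R * ε) (2 * R * (R + 1) * ε) η' hη'pos.le
          (by rw [hP0 ε hεIoi z i]; exact hφ ε hεIoi z)
          (hlen ε hεIoi z i) ?_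
        · rw [hPN ε hεIoi z i, hP0 ε hεIoi z i] at hkey
          have hkey' : |W z i - ⟪ψ (ε • latticeEmbed n z),
              φ ε (z + Pi.single i 1) - φ ε z⟫| ≤ η' * (2 * R * (R + 1) * ε) := hkey
          calc |ε ^ ((n:ℤ)-1) * v i * W z i - ε ^ ((n:ℤ)-1) * v i *
              ⟪ψ (ε • latticeEmbed n z), φ ε (z + Pi.single i 1) - φ ε z⟫|
              = ε ^ ((n:ℤ)-1) * |v i| * |W z i - ⟪ψ (ε • latticeEmbed n z),
                φ ε (z + Pi.single i 1) - φ ε z⟫| := by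
                rw [← mul_sub, abs_mul, abs_mul, abs_of_nonneg hzpnn]
            _ ≤ ε ^ ((n:ℤ)-1) * |v i| * (η' * (2 * R * (R + 1) * ε)) := by
                exact mul_le_mul_of_nonneg_left hkey'
                  (mul_nonneg hzpnn (abs_nonneg _))
            _ = |v i| * (η' * (2*R*(R+1)) * ε^n) := by rw [← hzpow]; ring
        · intro p hp
          have hRC : R * ε + 2 * R * (R + 1) * ε = C * ε := by rw [hCdef]; ring
          rw [hRC] at hp
          apply hmod
          rw [dist_eq_norm]
          exact lt_of_le_of_lt hp hCεδ
      calc ∑ i, |ε ^ ((n:ℤ)-1) * v i * W z i - ε ^ ((n:ℤ)-1) * v i *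
          ⟪ψ (ε • latticeEmbed n z), φ ε (z + Pi.single i 1) - φ ε z⟫|
          ≤ ∑ i, |v i| * (η' * (2*R*(R+1)) * ε^n) := Finset.sum_le_sum (fun i _ => hper i)
        _ = Sv * (η' * (2*R*(R+1)) * ε^n) := by rw [hSvdef]; exact (Finset.sum_mul _ _ _).symm
    -- Step 2 : decompose A-sum
    have hinner : ∀ (z : Fin n → ℤ) (i : Fin n),
        ⟪ψ (ε • latticeEmbed n z), φ ε (z + Pi.single i 1) - φ ε z⟫
        = ε * (ψ (ε • latticeEmbed n z)) i
          + (⟪ψ (ε • latticeEmbed n z),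
              φ ε (z + Pi.single i 1) - ε • latticeEmbed n (z + Pi.single i 1)⟫
            - ⟪ψ (ε • latticeEmbed n z), φ ε z - ε • latticeEmbed n z⟫) := by
      intro z i
      have hsplit : φ ε (z + Pi.single i 1) - φ ε z
          = ε • latticeEmbed n (Pi.single i 1)
            + ((φ ε (z + Pi.single i 1) - ε • latticeEmbed n (z + Pi.single i 1))
              - (φ ε z - ε • latticeEmbed n z)) := by
        rw [latticeEmbed_add, smul_add]; abel
      rw [hsplit, inner_add_right, inner_sub_right, real_inner_smul_right,
        inner_latticeEmbed_single]
    have hginner : ∀ y : EuclideanSpace ℝ (Fin n), ⟪ψ y, v⟫ = ∑ i, (ψ y) i * v i := by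
      intro y
      rw [PiLp.inner_apply]
      simp [RCLike.inner_apply]
      exact Finset.sum_congr rfl fun _ _ => mul_comm _ _
    have hshift : ∀ i : Fin n,
        |∑ z ∈ F, (⟪ψ (ε • latticeEmbed n z),
            φ ε (z + Pi.single i 1) - ε • latticeEmbed n (z + Pi.single i 1)⟫
          - ⟪ψ (ε • latticeEmbed n z), φ ε z - ε • latticeEmbed n z⟫)|
        ≤ (2 * (F.card : ℝ)) * (η' * (R * ε)) := by
      intro i
      set e1 : Fin n → ℤ := Pi.single i 1 with he1
      set F' : Finset (Fin n → ℤ) := F.image (· + e1) with hF'def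
      set G : Finset (Fin n → ℤ) := F ∪ F' with hGdef
      have hψF : ∀ w : Fin n → ℤ, w ∉ F → ψ (ε • latticeEmbed n w) = 0 := by
        intro w hw
        apply hψzero
        have hgt : ¬ ‖ε • latticeEmbed n w‖ ≤ K + C + 3 := fun h => hw ((hmemF w).mpr h)
        push_neg at hgt
        linarith
      have himg : ∑ z ∈ F, ⟪ψ (ε • latticeEmbed n z),
            φ ε (z + e1) - ε • latticeEmbed n (z + e1)⟫
          = ∑ w ∈ F', ⟪ψ (ε • latticeEmbed n (w - e1)), φ ε w - ε • latticeEmbed n w⟫ := by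
        rw [hF'def, Finset.sum_image (fun a _ b _ h => by simpa using h)]
        exact Finset.sum_congr rfl (fun z _ => by rw [add_sub_cancel_right])
      have h1 : ∑ w ∈ F', ⟪ψ (ε • latticeEmbed n (w - e1)), φ ε w - ε • latticeEmbed n w⟫
          = ∑ w ∈ G, ⟪ψ (ε • latticeEmbed n (w - e1)), φ ε w - ε • latticeEmbed n w⟫ := by
        refine Finset.sum_subset (hGdef ▸ Finset.subset_union_right) ?_
        intro w hwG hwF'
        have hw1 : w - e1 ∉ F := by
          intro hmem
          exact hwF' (Finset.mem_image.mpr ⟨w - e1, hmem, by rw [sub_add_cancel]⟩)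
        rw [hψF _ hw1, inner_zero_left]
      have h2 : ∑ z ∈ F, ⟪ψ (ε • latticeEmbed n z), φ ε z - ε • latticeEmbed n z⟫
          = ∑ z ∈ G, ⟪ψ (ε • latticeEmbed n z), φ ε z - ε • latticeEmbed n z⟫ := by
        refine Finset.sum_subset (hGdef ▸ Finset.subset_union_left) ?_
        intro w _ hwF
        rw [hψF _ hwF, inner_zero_left]
      rw [Finset.sum_sub_distrib, himg, h1, h2, ← Finset.sum_sub_distrib]
      refine (Finset.abs_sum_le_sum_abs _ _).trans ?_
      have hperw : ∀ w : Fin n → ℤ,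
          |⟪ψ (ε • latticeEmbed n (w - e1)), φ ε w - ε • latticeEmbed n w⟫
            - ⟪ψ (ε • latticeEmbed n w), φ ε w - ε • latticeEmbed n w⟫| ≤ η' * (R * ε) := by
        intro w
        rw [← inner_sub_left]
        refine (abs_real_inner_le_norm _ _).trans ?_
        have hd : ‖φ ε w - ε • latticeEmbed n w‖ ≤ R * ε := hφ ε hεIoi w
        have hps : ‖ψ (ε • latticeEmbed n (w - e1)) - ψ (ε • latticeEmbed n w)‖ ≤ η' := by
          apply hmod
          rw [dist_eq_norm]
          have hwe : ε • latticeEmbed n w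
              = ε • latticeEmbed n (w - e1) + ε • latticeEmbed n e1 := by
            rw [← smul_add, ← latticeEmbed_add, sub_add_cancel]
          rw [hwe]
          have hneg : ε • latticeEmbed n (w - e1)
              - (ε • latticeEmbed n (w - e1) + ε • latticeEmbed n e1)
              = -(ε • latticeEmbed n e1) := by abel
          rw [hneg, norm_neg, norm_smul, Real.norm_eq_abs, abs_of_pos hεIoi, he1,
            latticeEmbed_single_norm, mul_one]
          exact hεδ
        exact mul_le_mul hps hd (norm_nonneg _) hη'pos.le
      calc ∑ w ∈ G, |⟪ψ (ε • latticeEmbed n (w - e1)), φ ε w - ε • latticeEmbed n w⟫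
            - ⟪ψ (ε • latticeEmbed n w), φ ε w - ε • latticeEmbed n w⟫|
          ≤ ∑ _w ∈ G, η' * (R * ε) := Finset.sum_le_sum (fun w _ => hperw w)
        _ = (G.card : ℝ) * (η' * (R * ε)) := by rw [Finset.sum_const, nsmul_eq_mul]
        _ ≤ (2 * (F.card : ℝ)) * (η' * (R * ε)) := by
            have hc1 : G.card ≤ F.card + F'.card := by
              rw [hGdef]; exact Finset.card_union_le F F'
            have hc2 : F'.card ≤ F.card := by
              rw [hF'def]; exact Finset.card_image_le
            have hcard : (G.card : ℝ) ≤ 2 * (F.card : ℝ) := by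
              have : G.card ≤ 2 * F.card := by omega
              exact_mod_cast this
            exact mul_le_mul_of_nonneg_right hcard (by positivity)
    have hAsum : ∑ z ∈ F, A z
        = (∑ z ∈ F, ε ^ n * ⟪ψ (ε • latticeEmbed n z), v⟫)
          + ∑ i, ε ^ ((n:ℤ)-1) * v i * (∑ z ∈ F, (⟪ψ (ε • latticeEmbed n z),
              φ ε (z + Pi.single i 1) - ε • latticeEmbed n (z + Pi.single i 1)⟫
            - ⟪ψ (ε • latticeEmbed n z), φ ε z - ε • latticeEmbed n z⟫)) := by
      rw [hAdef]
      simp only []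
      rw [Finset.sum_comm]
      have hcol : ∀ i : Fin n, ∑ z ∈ F, ε ^ ((n:ℤ)-1) * v i *
          ⟪ψ (ε • latticeEmbed n z), φ ε (z + Pi.single i 1) - φ ε z⟫
          = (∑ z ∈ F, ε ^ ((n:ℤ)-1) * v i * (ε * (ψ (ε • latticeEmbed n z)) i))
            + ε ^ ((n:ℤ)-1) * v i * (∑ z ∈ F, (⟪ψ (ε • latticeEmbed n z),
                φ ε (z + Pi.single i 1) - ε • latticeEmbed n (z + Pi.single i 1)⟫
              - ⟪ψ (ε • latticeEmbed n z), φ ε z - ε • latticeEmbed n z⟫)) := by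
        intro i
        rw [Finset.mul_sum, ← Finset.sum_add_distrib]
        refine Finset.sum_congr rfl (fun z _ => ?_)
        rw [hinner z i]
        ring
      rw [Finset.sum_congr rfl (fun i _ => hcol i), Finset.sum_add_distrib]
      congr 1
      rw [Finset.sum_comm]
      refine Finset.sum_congr rfl (fun z _ => ?_)
      rw [hginner (ε • latticeEmbed n z), Finset.mul_sum]
      refine Finset.sum_congr rfl (fun i _ => ?_)
      rw [← hzpow]; ring
    have hstep2 : |(∑ z ∈ F, A z) - ∑ z ∈ F, ε ^ n * ⟪ψ (ε • latticeEmbed n z), v⟫|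
        ≤ Sv * (η' * (2*R) * V) := by
      rw [hAsum, add_sub_cancel_left]
      refine (Finset.abs_sum_le_sum_abs _ _).trans ?_
      have hpi : ∀ i : Fin n, |ε ^ ((n:ℤ)-1) * v i * (∑ z ∈ F, (⟪ψ (ε • latticeEmbed n z),
              φ ε (z + Pi.single i 1) - ε • latticeEmbed n (z + Pi.single i 1)⟫
            - ⟪ψ (ε • latticeEmbed n z), φ ε z - ε • latticeEmbed n z⟫))|
          ≤ |v i| * (η' * (2*R) * V) := by
        intro i
        rw [abs_mul, abs_mul, abs_of_nonneg hzpnn]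
        calc ε ^ ((n:ℤ)-1) * |v i| * |∑ z ∈ F, (⟪ψ (ε • latticeEmbed n z),
              φ ε (z + Pi.single i 1) - ε • latticeEmbed n (z + Pi.single i 1)⟫
            - ⟪ψ (ε • latticeEmbed n z), φ ε z - ε • latticeEmbed n z⟫)|
            ≤ ε ^ ((n:ℤ)-1) * |v i| * ((2 * (F.card : ℝ)) * (η' * (R * ε))) :=
              mul_le_mul_of_nonneg_left (hshift i) (mul_nonneg hzpnn (abs_nonneg _))
          _ = |v i| * ((η' * (2*R)) * ((F.card : ℝ) * (ε ^ ((n:ℤ)-1) * ε))) := by ring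
          _ = |v i| * ((η' * (2*R)) * ((F.card : ℝ) * ε ^ n)) := by rw [hzpow]
          _ ≤ |v i| * ((η' * (2*R)) * V) := by
              refine mul_le_mul_of_nonneg_left ?_ (abs_nonneg _)
              refine mul_le_mul_of_nonneg_left hcardV ?_
              positivity
          _ = |v i| * (η' * (2*R) * V) := by ring
      calc ∑ i, |ε ^ ((n:ℤ)-1) * v i * (∑ z ∈ F, (⟪ψ (ε • latticeEmbed n z),
              φ ε (z + Pi.single i 1) - ε • latticeEmbed n (z + Pi.single i 1)⟫
            - ⟪ψ (ε • latticeEmbed n z), φ ε z - ε • latticeEmbed n z⟫))|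
          ≤ ∑ i, |v i| * (η' * (2*R) * V) := Finset.sum_le_sum (fun i _ => hpi i)
        _ = Sv * (η' * (2*R) * V) := by rw [hSvdef]; exact (Finset.sum_mul _ _ _).symm
    -- Step 3 : Riemann sums
    have hgcont : Continuous (fun y : EuclideanSpace ℝ (Fin n) => ⟪ψ y, v⟫) :=
      hψ.inner continuous_const
    have hgc : HasCompactSupport (fun y : EuclideanSpace ℝ (Fin n) => ⟪ψ y, v⟫) := by
      apply hψc.mono
      intro y hy
      rw [Function.mem_support] at hy ⊢
      intro h0
      exact hy (by rw [h0, inner_zero_left])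
    have hgsupp : tsupport (fun y : EuclideanSpace ℝ (Fin n) => ⟪ψ y, v⟫)
        ⊆ Metric.closedBall 0 K := by
      refine subset_trans (closure_mono ?_) hKsub
      intro y hy
      rw [Function.mem_support] at hy ⊢
      intro h0
      exact hy (by rw [h0, inner_zero_left])
    have hriem := riemann_sum_close (fun y : EuclideanSpace ℝ (Fin n) => ⟪ψ y, v⟫)
      hgcont hgc K hgsupp ε (η' * ‖v‖) hεIoi F ?_ ?_
    rotate_left
    · intro z hz
      refine (hmemF z).mpr ?_
      nlinarith
    · intro x y hxy
      rw [← inner_sub_left]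
      exact (abs_real_inner_le_norm _ _).trans
        (mul_le_mul_of_nonneg_right (hmod x y (lt_of_le_of_lt hxy hnεδ)) (norm_nonneg v))
    have hstep3 : |(∑ z ∈ F, ε ^ n * ⟪ψ (ε • latticeEmbed n z), v⟫)
        - ∫ x, ⟪ψ x, v⟫| ≤ η' * ‖v‖ * V := by
      refine hriem.trans ?_
      calc (F.card : ℝ) * (η' * ‖v‖ * ε ^ n) = (η' * ‖v‖) * ((F.card : ℝ) * ε ^ n) := by ring
        _ ≤ (η' * ‖v‖) * V := by
            refine mul_le_mul_of_nonneg_left hcardV ?_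
            positivity
        _ = η' * ‖v‖ * V := by ring
    -- Put it all together
    have hfinal : |(∑ z ∈ F, ∑ i, ε ^ ((n:ℤ)-1) * v i * W z i) - ∫ x, ⟪ψ x, v⟫| < η := by
      have ht1 : |(∑ z ∈ F, ∑ i, ε ^ ((n:ℤ)-1) * v i * W z i) - ∑ z ∈ F, A z|
          ≤ (F.card : ℝ) * (Sv * (η' * (2*R*(R+1)) * ε^n)) := by
        rw [← Finset.sum_sub_distrib]
        refine (Finset.abs_sum_le_sum_abs _ _).trans ?_
        calc ∑ z ∈ F, |(∑ i, ε ^ ((n:ℤ)-1) * v i * W z i) - A z|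
            ≤ ∑ _z ∈ F, Sv * (η' * (2*R*(R+1)) * ε^n) :=
              Finset.sum_le_sum (fun z _ => hstep1 z)
          _ = (F.card : ℝ) * (Sv * (η' * (2*R*(R+1)) * ε^n)) := by
              rw [Finset.sum_const, nsmul_eq_mul]
      have ht1' : (F.card : ℝ) * (Sv * (η' * (2*R*(R+1)) * ε^n))
          ≤ η' * (Sv * (2*R*(R+1)) * V) := by
        calc (F.card : ℝ) * (Sv * (η' * (2*R*(R+1)) * ε^n))
            = (η' * (Sv * (2*R*(R+1)))) * ((F.card : ℝ) * ε^n) := by ring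
          _ ≤ (η' * (Sv * (2*R*(R+1)))) * V := by
              refine mul_le_mul_of_nonneg_left hcardV ?_
              have : (0:ℝ) ≤ 2*R*(R+1) := by nlinarith
              positivity
          _ = η' * (Sv * (2*R*(R+1)) * V) := by ring
      have habs : |(∑ z ∈ F, ∑ i, ε ^ ((n:ℤ)-1) * v i * W z i) - ∫ x, ⟪ψ x, v⟫|
          ≤ |(∑ z ∈ F, ∑ i, ε ^ ((n:ℤ)-1) * v i * W z i) - ∑ z ∈ F, A z|
            + |(∑ z ∈ F, A z) - ∑ z ∈ F, ε ^ n * ⟪ψ (ε • latticeEmbed n z), v⟫|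
            + |(∑ z ∈ F, ε ^ n * ⟪ψ (ε • latticeEmbed n z), v⟫) - ∫ x, ⟪ψ x, v⟫| := by
        calc |(∑ z ∈ F, ∑ i, ε ^ ((n:ℤ)-1) * v i * W z i) - ∫ x, ⟪ψ x, v⟫|
            = |((∑ z ∈ F, ∑ i, ε ^ ((n:ℤ)-1) * v i * W z i) - ∑ z ∈ F, A z)
              + ((∑ z ∈ F, A z) - ∑ z ∈ F, ε ^ n * ⟪ψ (ε • latticeEmbed n z), v⟫)
              + ((∑ z ∈ F, ε ^ n * ⟪ψ (ε • latticeEmbed n z), v⟫) - ∫ x, ⟪ψ x, v⟫)| := by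
              ring_nf
          _ ≤ _ := abs_add_three _ _ _
      have hsum : |(∑ z ∈ F, ∑ i, ε ^ ((n:ℤ)-1) * v i * W z i) - ∫ x, ⟪ψ x, v⟫|
          ≤ η' * D := by
        rw [hDdef]
        have := ht1.trans ht1'
        calc |(∑ z ∈ F, ∑ i, ε ^ ((n:ℤ)-1) * v i * W z i) - ∫ x, ⟪ψ x, v⟫|
            ≤ η' * (Sv * (2*R*(R+1)) * V) + Sv * (η' * (2*R) * V) + η' * ‖v‖ * V := by
              linarith [habs, hstep2, hstep3]
          _ = η' * (Sv * (2*R*(R+1)) * V + Sv * (2*R) * V + ‖v‖ * V) := by ring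
      refine lt_of_le_of_lt hsum ?_
      rw [hη'def, div_mul_eq_mul_div, div_lt_iff₀ (by linarith)]
      nlinarith
    show dist (∑ᶠ z : Fin n → ℤ, ∑ i, ε ^ ((n:ℤ)-1) * v i * W z i) (∫ x, ⟪ψ x, v⟫) < η
    rw [Real.dist_eq, hgoal]
    exact hfinal
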